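/- Let d = k·h for integers k ≥ 1, h ≥ 1, let v ∈ ℝ^{kh} be assigned to cluster j, and let δ ∈ ℝ^{kh} be split into a first block δ¹ = (δ_1, …, δ_h) and a second block δ² = (δ_{h+1}, …, δ_{kh}). Suppose that for every cluster index j' ≠ j both partial sums are nonnegative: Σ_{i=1}^{h} δ_i · (e_j − e_{j'})_i ≥ 0 and Σ_{i=h+1}^{kh} δ_i · (e_j − e_{j'})_i ≥ 0. Then v + δ is assigned to the same cluster j as v. -/

import Mathlib

open scoped RealInnerProductSpace

/-- `v` is assigned to cluster `j` iff its inner product with centroid `e j`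
strictly exceeds the inner product with every other centroid. -/
def assignedToCluster {d C : ℕ} (e : Fin C → EuclideanSpace ℝ (Fin d))
    (v : EuclideanSpace ℝ (Fin d)) (j : Fin C) : Prop :=
  ∀ j' : Fin C, j' ≠ j → ⟪v, e j⟫ > ⟪v, e j'⟫

open Finset

theorem real_inner_nonneg_of_sum_filter_nonneg {ι : Type*} [Fintype ι] (p : ι → Prop)
    [DecidablePred p] {x y : EuclideanSpace ℝ ι}
    (hp : 0 ≤ ∑ i ∈ univ.filter p, x i * y i)
    (hnp : 0 ≤ ∑ i ∈ univ.filter (fun i => ¬p i), x i * y i) : 0 ≤ ⟪x, y⟫ := by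
  have hsum : ⟪x, y⟫ = ∑ i, x i * y i := by simp [PiLp.inner_apply, mul_comm]
  rw [hsum, ← sum_filter_add_sum_filter_not univ p]
  exact add_nonneg hp hnp

theorem assignedToCluster_add {d C : ℕ} {e : Fin C → EuclideanSpace ℝ (Fin d)}
    {v δ : EuclideanSpace ℝ (Fin d)} {j : Fin C} (hv : assignedToCluster e v j)
    (hδ : ∀ j', j' ≠ j → 0 ≤ ⟪δ, e j - e j'⟫) : assignedToCluster e (v + δ) j := by
  intro j' hj'
  have hvj := hv j' hj'
  have hδj := hδ j' hj'
  rw [inner_sub_right] at hδj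
  rw [inner_add_left, inner_add_left]
  linarith

theorem directional_perturbation_blocks_general {k h C : ℕ}
    (e : Fin C → EuclideanSpace ℝ (Fin (k * h)))
    (v δ : EuclideanSpace ℝ (Fin (k * h))) (j : Fin C)
    (hv : assignedToCluster e v j)
    (hblock1 : ∀ j' : Fin C, j' ≠ j →
      0 ≤ ∑ i ∈ Finset.univ.filter (fun i : Fin (k * h) => (i : ℕ) < h),
        δ i * (e j i - e j' i))
    (hblock2 : ∀ j' : Fin C, j' ≠ j →
      0 ≤ ∑ i ∈ Finset.univ.filter (fun i : Fin (k * h) => h ≤ (i : ℕ)),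
        δ i * (e j i - e j' i)) :
    assignedToCluster e (v + δ) j := by
  refine assignedToCluster_add hv fun j' hj' =>
    real_inner_nonneg_of_sum_filter_nonneg (fun i : Fin (k * h) => (i : ℕ) < h) ?_ ?_
  · simpa only [PiLp.sub_apply] using hblock1 j' hj'
  · simpa only [PiLp.sub_apply, not_lt] using hblock2 j' hj'

theorem directional_perturbation_blocks {k h C : ℕ} (hk : 1 ≤ k) (hh : 1 ≤ h) (hC : 1 ≤ C)
    (e : Fin C → EuclideanSpace ℝ (Fin (k * h)))
    (v δ : EuclideanSpace ℝ (Fin (k * h))) (j : Fin C)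
    (hv : assignedToCluster e v j)
    (hblock1 : ∀ j' : Fin C, j' ≠ j →
      0 ≤ ∑ i ∈ Finset.univ.filter (fun i : Fin (k * h) => (i : ℕ) < h),
        δ i * (e j i - e j' i))
    (hblock2 : ∀ j' : Fin C, j' ≠ j →
      0 ≤ ∑ i ∈ Finset.univ.filter (fun i : Fin (k * h) => h ≤ (i : ℕ)),
        δ i * (e j i - e j' i)) :
    assignedToCluster e (v + δ) j :=
  directional_perturbation_blocks_general e v δ j hv hblock1 hblock2
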